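/- Let L|K be a finitely σ-generated extension of difference fields such that L|K is Galois as a field extension, and let a be a minimal substandard generator of L|K. Then σ(a) is also a substandard generator of L|K, and [K(σ(a)) : K] = [K(a) : K]. -/

import Mathlib

open IntermediateField

/-- The tower of intermediate fields `E_i = K(F, σ(F), …, σ^i(F))`. -/
noncomputable def sigmaPartialField (K L : Type) [Field K] [Field L] [Algebra K L]
    (σL : L →+* L) (F : Set L) (i : ℕ) : IntermediateField K L :=
  IntermediateField.adjoin K (⋃ j ∈ Finset.range (i + 1), σL^[j] '' F)

/-- `L|K` has limit degree `d`: for some finite σ-generating set `F` of `L|K`, the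
degrees `d_i = [E_i : E_{i-1}]` (expressed via `[E_{i+1} : K] = d·[E_i : K]`)
are eventually equal to `d`. -/
def HasLimitDegree (K L : Type) [Field K] [Field L] [Algebra K L]
    (σL : L →+* L) (d : ℕ) : Prop :=
  ∃ F : Finset L,
    IntermediateField.adjoin K (⋃ i : ℕ, σL^[i] '' (F : Set L)) = ⊤ ∧
      ∃ N : ℕ, ∀ i ≥ N,
        Module.finrank K ↥(sigmaPartialField K L σL (F : Set L) (i + 1))
          = d * Module.finrank K ↥(sigmaPartialField K L σL (F : Set L) i)

/-- `a` is a substandard generator of `L|K` (with `d = ld(L|K)`):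
`L` is σ-radicial over `K⟨a⟩`, `[K(a,σ(a)) : K(a)] = d`, and `K(a)|K` is Galois. -/
def IsSubstandardGenerator (K L : Type) [Field K] [Field L] [Algebra K L]
    (σL : L →+* L) (d : ℕ) (a : L) : Prop :=
  (∀ x : L, ∃ n : ℕ,
      σL^[n] x ∈ IntermediateField.adjoin K (Set.range fun i : ℕ => σL^[i] a)) ∧
    Module.finrank K ↥(IntermediateField.adjoin K {a, σL a})
      = d * Module.finrank K ↥(IntermediateField.adjoin K {a}) ∧
    IsGalois K ↥(IntermediateField.adjoin K ({a} : Set L))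

/-! Let `G_j = K(a, σa, …, σʲa)` and `d_j = [G_{j+1} : G_j]`. Since σ maps `G_j` into `G_{j+1}`,
transporting minimal polynomials along σ gives `d_{j+1} ≤ d_j`. Since `L` is σ-radicial over
`K⟨a⟩`, a shift of the tower of any finite σ-generating set of `L` lies in a shift of `(G_j)` up
to a fixed finite extension; comparing growth rates gives `ld ≤ d_j` for every `j`. Hence
`ld ≤ d_1 ≤ [K(σa, σ²a) : K(σa)] ≤ [K(a, σa) : K(a)] = ld`. The conjugates of `σa` are images
under σ of conjugates of `a`, which lie in `K(a)`, so `K(σa)|K` is normal. Finally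
`[K(σa) : K] ≤ [K(a) : K]`, and minimality of `a` forces equality. -/

open Polynomial

theorem finrank_restrictScalars_eq_mul {K L : Type*} [Field K] [Field L] [Algebra K L]
    (M : IntermediateField K L) (N : IntermediateField M L) :
    Module.finrank K (N.restrictScalars K) = Module.finrank K M * Module.finrank M N :=
  (Module.finrank_mul_finrank K M N).symm

theorem finrank_adjoin_pair {K L : Type*} [Field K] [Field L] [Algebra K L] (x y : L) :
    Module.finrank K (adjoin K {x, y}) = Module.finrank K K⟮x⟯ * Module.finrank K⟮x⟯ K⟮x⟯⟮y⟯ := by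
  rw [← adjoin_simple_adjoin_simple (F := K)]
  exact finrank_restrictScalars_eq_mul _ _

section Semilinear

variable {L A B : Type*} [Field L] [Field A] [Field B] [Algebra A L] [Algebra B L]
  (σ : L →+* L) (ψ : A →+* B)

theorem map_mem_adjoin_of_forall_mem
    (hψ : ∀ y : A, σ (algebraMap A L y) = algebraMap B L (ψ y))
    {S T : Set L} (hST : ∀ s ∈ S, σ s ∈ adjoin B T) {x : L} (hx : x ∈ adjoin A S) :
    σ x ∈ adjoin B T := by
  induction hx using adjoin_induction with
  | mem s hs => exact hST s hs
  | algebraMap y => rw [hψ]; exact IntermediateField.algebraMap_mem _ _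
  | add x y _ _ hx hy => rw [map_add]; exact add_mem hx hy
  | inv x _ hx => rw [map_inv₀]; exact inv_mem hx
  | mul x y _ _ hx hy => rw [map_mul]; exact mul_mem hx hy

theorem map_mem_adjoin_simple_map
    (hψ : ∀ y : A, σ (algebraMap A L y) = algebraMap B L (ψ y))
    {x y : L} (hy : y ∈ A⟮x⟯) : σ y ∈ B⟮σ x⟯ :=
  map_mem_adjoin_of_forall_mem σ ψ hψ
    (fun _ hs => (Set.mem_singleton_iff.1 hs) ▸ mem_adjoin_simple_self B (σ x)) hy

theorem aeval_map_minpoly_map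
    (hψ : ∀ y : A, σ (algebraMap A L y) = algebraMap B L (ψ y)) (x : L) :
    aeval (σ x) ((minpoly A x).map ψ) = 0 := by
  have hcomp : (algebraMap B L).comp ψ = σ.comp (algebraMap A L) :=
    RingHom.ext fun y => (hψ y).symm
  rw [aeval_def, eval₂_map, hcomp, ← hom_eval₂, ← aeval_def, minpoly.aeval, map_zero]

theorem finrank_adjoin_simple_map_le
    (hψ : ∀ y : A, σ (algebraMap A L y) = algebraMap B L (ψ y))
    {x : L} (hx : IsIntegral A x) :
    Module.finrank B B⟮σ x⟯ ≤ Module.finrank A A⟮x⟯ := by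
  have hroot := aeval_map_minpoly_map σ ψ hψ x
  have hσx : IsIntegral B (σ x) := ⟨_, (minpoly.monic hx).map ψ, hroot⟩
  rw [adjoin.finrank hx, adjoin.finrank hσx, ← natDegree_map ψ]
  exact natDegree_le_of_dvd (minpoly.dvd _ _ hroot) (map_ne_zero (minpoly.ne_zero hx))

end Semilinear

section Galois

variable {K L : Type*} [Field K] [Field L] [Algebra K L] {σK : K →+* K} {σL : L →+* L}

theorem mem_adjoin_simple_map_of_aeval_minpoly_eq_zero
    (hcomp : ∀ x : K, σL (algebraMap K L x) = algebraMap K L (σK x))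
    {a : L} [Normal K K⟮a⟯] {x : L} (hx : aeval x (minpoly K (σL a)) = 0) :
    x ∈ K⟮σL a⟯ := by
  let a' : K⟮a⟯ := ⟨a, mem_adjoin_simple_self K a⟩
  have ha : IsIntegral K a := isIntegral_iff.1 (Normal.isIntegral ‹_› a')
  have hsplit : ((minpoly K a).map (algebraMap K K⟮a⟯)).Splits := by
    have := Normal.splits ‹_› a'
    rwa [minpoly_eq] at this
  have hmap : ((minpoly K a).map (algebraMap K K⟮a⟯)).map (σL.comp (algebraMap K⟮a⟯ L))
      = ((minpoly K a).map σK).map (algebraMap K L) := by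
    rw [Polynomial.map_map, Polynomial.map_map]
    congr 1
    exact RingHom.ext hcomp
  have hroot : (((minpoly K a).map (algebraMap K K⟮a⟯)).map
      (σL.comp (algebraMap K⟮a⟯ L))).IsRoot x := by
    obtain ⟨q, hq⟩ := minpoly.dvd K (σL a) (aeval_map_minpoly_map σL σK hcomp a)
    rw [hmap, IsRoot, eval_map_algebraMap, hq, map_mul, hx, zero_mul]
  obtain ⟨y, rfl⟩ := hsplit.mem_range_of_isRoot (map_ne_zero (minpoly.ne_zero ha)) hroot
  exact map_mem_adjoin_simple_map σL σK hcomp y.2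

theorem isGalois_adjoin_simple_map [IsGalois K L]
    (hcomp : ∀ x : K, σL (algebraMap K L x) = algebraMap K L (σK x))
    (a : L) [IsGalois K K⟮a⟯] : IsGalois K K⟮σL a⟯ := by
  have : Normal K K⟮σL a⟯ := normal_iff_forall_map_le.2 fun τ => by
    rw [adjoin_map, Set.image_singleton, adjoin_simple_le_iff]
    refine mem_adjoin_simple_map_of_aeval_minpoly_eq_zero hcomp ?_
    rw [aeval_algHom_apply, minpoly.aeval, map_zero]
  have : Algebra.IsSeparable K K⟮σL a⟯ := Algebra.isSeparable_tower_bot_of_isSeparable K _ L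
  exact IsGalois.mk

end Galois

theorem Nat.pow_mul_eq_of_forall_ge {f : ℕ → ℕ} {d N : ℕ} (hf : ∀ i ≥ N, f (i + 1) = d * f i)
    {i : ℕ} (hi : N ≤ i) (k : ℕ) : f (i + k) = d ^ k * f i := by
  induction k with
  | zero => simp
  | succ k ih => rw [← Nat.add_assoc, hf _ (by omega), ih, pow_succ', Nat.mul_assoc]

theorem Nat.le_pow_mul_of_antitone {f r : ℕ → ℕ} (hf : ∀ j, f (j + 1) = f j * r j)
    (hr : Antitone r) (j k : ℕ) : f (j + k) ≤ r j ^ k * f j := by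
  induction k with
  | zero => simp
  | succ k ih =>
    calc f (j + (k + 1)) = f (j + k) * r (j + k) := hf (j + k)
      _ ≤ (r j ^ k * f j) * r j := Nat.mul_le_mul ih (hr (Nat.le_add_right j k))
      _ = r j ^ (k + 1) * f j := by ring

theorem Nat.le_of_forall_pow_mul_le {d g D B : ℕ} (hD : 0 < D)
    (h : ∀ k, d ^ k * D ≤ g ^ k * B) : d ≤ g := by
  by_contra! hgd
  rcases Nat.eq_zero_or_pos g with rfl | hg
  · have := h 1
    simp only [pow_one, zero_mul] at this
    exact (Nat.mul_pos hgd hD).ne' (Nat.le_zero.1 this)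
  · have hratio : (1 : ℚ) < d / g := (one_lt_div (by positivity)).2 (by exact_mod_cast hgd)
    obtain ⟨k, hk⟩ := pow_unbounded_of_one_lt (B : ℚ) hratio
    rw [div_pow, lt_div_iff₀ (by positivity)] at hk
    have : g ^ k * B < d ^ k * D := by
      calc g ^ k * B < d ^ k := by rw [mul_comm]; exact_mod_cast hk
        _ ≤ d ^ k * D := Nat.le_mul_of_pos_right _ hD
    exact absurd (h k) (not_le.2 this)

section SigmaTower

variable {K L : Type} [Field K] [Field L] [Algebra K L] {σK : K →+* K} {σL : L →+* L}

theorem mem_iUnion_range_iterate_image {F : Set L} {i : ℕ} {x : L} :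
    x ∈ (⋃ j ∈ Finset.range (i + 1), σL^[j] '' F) ↔ ∃ j ≤ i, ∃ f ∈ F, σL^[j] f = x := by
  simp

theorem iterate_mem_sigmaPartialField {F : Set L} {f : L} (hf : f ∈ F) {i j : ℕ} (hj : j ≤ i) :
    σL^[j] f ∈ sigmaPartialField K L σL F i :=
  subset_adjoin _ _ (mem_iUnion_range_iterate_image.2 ⟨j, hj, f, hf, rfl⟩)

theorem sigmaPartialField_le_iff {F : Set L} {i : ℕ} {M : IntermediateField K L} :
    sigmaPartialField K L σL F i ≤ M ↔ ∀ j ≤ i, ∀ f ∈ F, σL^[j] f ∈ M := by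
  refine ⟨fun h j hj f hf => h (iterate_mem_sigmaPartialField hf hj), fun h => ?_⟩
  rw [sigmaPartialField, adjoin_le_iff]
  intro x hx
  obtain ⟨j, hj, f, hf, rfl⟩ := mem_iUnion_range_iterate_image.1 hx
  exact h j hj f hf

theorem sigmaPartialField_mono (F : Set L) : Monotone (sigmaPartialField K L σL F) :=
  fun _ _ hii' => sigmaPartialField_le_iff.2 fun _ hj _ hf =>
    iterate_mem_sigmaPartialField hf (hj.trans hii')

theorem finiteDimensional_sigmaPartialField [Algebra.IsAlgebraic K L] {F : Set L}
    (hF : F.Finite) (i : ℕ) : FiniteDimensional K (sigmaPartialField K L σL F i) := by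
  have : Finite (⋃ j ∈ Finset.range (i + 1), σL^[j] '' F) :=
    (Set.Finite.biUnion (Finset.finite_toSet _) fun _ _ => hF.image _).to_subtype
  exact finiteDimensional_adjoin fun x _ => Algebra.IsIntegral.isIntegral x

theorem finrank_sigmaPartialField_succ (F : Set L) (i : ℕ) :
    Module.finrank K (sigmaPartialField K L σL F (i + 1)) =
      Module.finrank K (sigmaPartialField K L σL F i) *
        Module.finrank (sigmaPartialField K L σL F i)
          (adjoin (sigmaPartialField K L σL F i) (σL^[i + 1] '' F)) := by
  have hgens : (⋃ j ∈ Finset.range (i + 1 + 1), σL^[j] '' F) =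
      (⋃ j ∈ Finset.range (i + 1), σL^[j] '' F) ∪ σL^[i + 1] '' F := by
    rw [Finset.range_add_one, Finset.set_biUnion_insert, Set.union_comm]
  rw [sigmaPartialField, hgens, ← adjoin_adjoin_left]
  exact finrank_restrictScalars_eq_mul _ _

theorem map_mem_sigmaPartialField_succ
    (hcomp : ∀ x : K, σL (algebraMap K L x) = algebraMap K L (σK x))
    {F : Set L} {i : ℕ} {x : L} (hx : x ∈ sigmaPartialField K L σL F i) :
    σL x ∈ sigmaPartialField K L σL F (i + 1) := by
  refine map_mem_adjoin_of_forall_mem σL σK hcomp (fun s hs => ?_) hx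
  obtain ⟨j, hj, f, hf, rfl⟩ := mem_iUnion_range_iterate_image.1 hs
  rw [← Function.iterate_succ_apply' σL j f]
  exact iterate_mem_sigmaPartialField hf (Nat.succ_le_succ hj)

theorem iterate_map_mem_sigmaPartialField_add
    (hcomp : ∀ x : K, σL (algebraMap K L x) = algebraMap K L (σK x))
    {F : Set L} {i : ℕ} {x : L} (hx : x ∈ sigmaPartialField K L σL F i) (k : ℕ) :
    σL^[k] x ∈ sigmaPartialField K L σL F (i + k) := by
  induction k with
  | zero => exact hx
  | succ k ih =>
    rw [Function.iterate_succ_apply']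
    exact map_mem_sigmaPartialField_succ hcomp ih

theorem sigmaPartialField_add_le_sup
    (hcomp : ∀ x : K, σL (algebraMap K L x) = algebraMap K L (σK x))
    {F F' : Set L} {m s : ℕ} (hms : ∀ f ∈ F, σL^[m] f ∈ sigmaPartialField K L σL F' s) (i : ℕ) :
    sigmaPartialField K L σL F (m + i) ≤
      sigmaPartialField K L σL F' (s + i) ⊔ sigmaPartialField K L σL F m := by
  refine sigmaPartialField_le_iff.2 fun j hj f hf => ?_
  rcases le_or_gt j m with hjm | hmj
  · exact le_sup_right (a := sigmaPartialField K L σL F' (s + i))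
      (iterate_mem_sigmaPartialField hf hjm)
  · obtain ⟨k, rfl⟩ := Nat.exists_eq_add_of_le hmj.le
    rw [Nat.add_comm m k, Function.iterate_add_apply]
    exact le_sup_left (b := sigmaPartialField K L σL F m)
      (sigmaPartialField_mono F' (show s + k ≤ s + i by omega)
        (iterate_map_mem_sigmaPartialField_add hcomp (hms f hf) k))

theorem exists_mem_sigmaPartialField_singleton {a x : L}
    (hx : x ∈ adjoin K (Set.range fun i : ℕ => σL^[i] a)) :
    ∃ j, x ∈ sigmaPartialField K L σL {a} j := by
  have hle : adjoin K (Set.range fun i : ℕ => σL^[i] a) ≤ ⨆ j, sigmaPartialField K L σL {a} j := by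
    rw [adjoin_le_iff]
    rintro _ ⟨i, rfl⟩
    exact le_iSup (sigmaPartialField K L σL {a}) i
      (iterate_mem_sigmaPartialField (Set.mem_singleton a) le_rfl)
  have hdir := (sigmaPartialField_mono (K := K) (σL := σL) {a}).directed_le
  simpa only [← SetLike.mem_coe, coe_iSup_of_directed hdir, Set.mem_iUnion] using hle hx

theorem exists_iterate_mem_sigmaPartialField_singleton
    (hcomp : ∀ x : K, σL (algebraMap K L x) = algebraMap K L (σK x)) {a : L}
    (hrad : ∀ x : L, ∃ n : ℕ, σL^[n] x ∈ adjoin K (Set.range fun i : ℕ => σL^[i] a))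
    (F : Finset L) : ∃ m s, ∀ f ∈ F, σL^[m] f ∈ sigmaPartialField K L σL {a} s := by
  classical
  induction F using Finset.induction_on with
  | empty => exact ⟨0, 0, by simp⟩
  | insert g F _ ih =>
    obtain ⟨m, s, hF⟩ := ih
    obtain ⟨n, hn⟩ := hrad g
    obtain ⟨t, hg⟩ := exists_mem_sigmaPartialField_singleton hn
    refine ⟨m + n, s + n + t + m, fun f hf => ?_⟩
    rcases Finset.mem_insert.1 hf with rfl | hf
    · rw [Function.iterate_add_apply]
      exact sigmaPartialField_mono _ (by omega) (iterate_map_mem_sigmaPartialField_add hcomp hg m)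
    · rw [Nat.add_comm m, Function.iterate_add_apply]
      exact sigmaPartialField_mono _ (by omega)
        (iterate_map_mem_sigmaPartialField_add hcomp (hF f hf) n)

theorem iterate_succ_mem_adjoin_range_iterate_map
    (hcomp : ∀ x : K, σL (algebraMap K L x) = algebraMap K L (σK x)) {a x : L} {n : ℕ}
    (hx : σL^[n] x ∈ adjoin K (Set.range fun i : ℕ => σL^[i] a)) :
    σL^[n + 1] x ∈ adjoin K (Set.range fun i : ℕ => σL^[i] (σL a)) := by
  rw [Function.iterate_succ_apply']
  refine map_mem_adjoin_of_forall_mem σL σK hcomp ?_ hx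
  rintro _ ⟨i, rfl⟩
  refine subset_adjoin _ _ ⟨i, ?_⟩
  simp only [← Function.iterate_succ_apply, Function.iterate_succ_apply']

end SigmaTower

section StepDegree

variable {K L : Type} [Field K] [Field L] [Algebra K L] {σK : K →+* K} {σL : L →+* L}

/-- `d_j = [G_{j+1} : G_j]`, where `G_j = K(a, …, σʲa)`. -/
noncomputable def sigmaStepDegree (K L : Type) [Field K] [Field L] [Algebra K L]
    (σL : L →+* L) (a : L) (j : ℕ) : ℕ :=
  Module.finrank (sigmaPartialField K L σL {a} j)
    (adjoin (sigmaPartialField K L σL {a} j) {σL^[j + 1] a})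

theorem finrank_sigmaPartialField_singleton_succ (a : L) (j : ℕ) :
    Module.finrank K (sigmaPartialField K L σL {a} (j + 1)) =
      Module.finrank K (sigmaPartialField K L σL {a} j) * sigmaStepDegree K L σL a j := by
  rw [finrank_sigmaPartialField_succ, Set.image_singleton, sigmaStepDegree]

theorem sigmaStepDegree_antitone [Algebra.IsAlgebraic K L]
    (hcomp : ∀ x : K, σL (algebraMap K L x) = algebraMap K L (σK x)) (a : L) :
    Antitone (sigmaStepDegree K L σL a) := by
  refine antitone_nat_of_succ_le fun j => ?_
  have hσ := finrank_adjoin_simple_map_le σL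
    (σL.restrict (sigmaPartialField K L σL {a} j) (sigmaPartialField K L σL {a} (j + 1))
      fun _ => map_mem_sigmaPartialField_succ hcomp)
    (fun _ => rfl) (Algebra.IsIntegral.isIntegral (R := K) (σL^[j + 1] a)).tower_top
  rwa [← Function.iterate_succ_apply' σL (j + 1) a] at hσ

/-- Some `σᵐ(F)` lies in `G_s = K(a, …, σˢa)`, so `E_{m+i}(F) ≤ G_{s+i} ⊔ E_m(F)`; hence
`ldᵏ·[E_{m+i}(F) : K] = [E_{m+i+k}(F) : K] ≤ d_{s+i}ᵏ·[G_{s+i} : K]·[E_m(F) : K]` for all `k`. -/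
theorem le_sigmaStepDegree [Algebra.IsAlgebraic K L]
    (hcomp : ∀ x : K, σL (algebraMap K L x) = algebraMap K L (σK x)) {d : ℕ}
    (hld : HasLimitDegree K L σL d) {a : L}
    (hrad : ∀ x : L, ∃ n : ℕ, σL^[n] x ∈ adjoin K (Set.range fun i : ℕ => σL^[i] a)) (j : ℕ) :
    d ≤ sigmaStepDegree K L σL a j := by
  obtain ⟨F, -, N, hN⟩ := hld
  obtain ⟨m, s, hms⟩ := exists_iterate_mem_sigmaPartialField_singleton hcomp hrad F
  let E := sigmaPartialField K L σL (F : Set L)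
  let G := sigmaPartialField K L σL {a}
  have := finiteDimensional_sigmaPartialField (K := K) (σL := σL) F.finite_toSet
  have := finiteDimensional_sigmaPartialField (K := K) (σL := σL) (Set.finite_singleton a)
  suffices h : ∀ i ≥ N, d ≤ sigmaStepDegree K L σL a (s + i) from
    (h (N + j) (Nat.le_add_right N j)).trans (sigmaStepDegree_antitone hcomp a (by omega))
  intro i hi
  refine Nat.le_of_forall_pow_mul_le (D := Module.finrank K (E (m + i)))
    (B := Module.finrank K (G (s + i)) * Module.finrank K (E m)) Module.finrank_pos fun k => ?_
  calc d ^ k * Module.finrank K (E (m + i))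
      = Module.finrank K (E (m + i + k)) :=
        (Nat.pow_mul_eq_of_forall_ge (f := fun i => Module.finrank K (E i)) hN (by omega) k).symm
    _ ≤ Module.finrank K ↥(G (s + i + k) ⊔ E m) := by
        rw [Nat.add_assoc m, Nat.add_assoc s]
        exact finrank_le_of_le_right (sigmaPartialField_add_le_sup hcomp hms (i + k))
    _ ≤ Module.finrank K (G (s + i + k)) * Module.finrank K (E m) := finrank_sup_le _ _
    _ ≤ sigmaStepDegree K L σL a (s + i) ^ k * Module.finrank K (G (s + i)) *
          Module.finrank K (E m) :=
        Nat.mul_le_mul_right _ (Nat.le_pow_mul_of_antitone (f := fun j => Module.finrank K (G j))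
          (finrank_sigmaPartialField_singleton_succ a) (sigmaStepDegree_antitone hcomp a) _ k)
    _ = sigmaStepDegree K L σL a (s + i) ^ k *
          (Module.finrank K (G (s + i)) * Module.finrank K (E m)) := Nat.mul_assoc _ _ _

end StepDegree

/-- If `a` is a minimal substandard generator of a finitely σ-generated Galois
difference field extension `L|K`, then `σ(a)` is also a substandard generator and
`[K(σ(a)) : K] = [K(a) : K]`. -/
theorem strongly_etale_stmt19
    (K L : Type) [Field K] [Field L] [Algebra K L] [IsGalois K L]
    (σK : K →+* K) (σL : L →+* L)
    (hcomp : ∀ x : K, σL (algebraMap K L x) = algebraMap K L (σK x))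
    (d : ℕ) (hld : HasLimitDegree K L σL d)
    (a : L) (ha : IsSubstandardGenerator K L σL d a)
    (hmin : ∀ b : L, IsSubstandardGenerator K L σL d b →
      Module.finrank K ↥(IntermediateField.adjoin K ({a} : Set L))
        ≤ Module.finrank K ↥(IntermediateField.adjoin K ({b} : Set L))) :
    IsSubstandardGenerator K L σL d (σL a) ∧
      Module.finrank K ↥(IntermediateField.adjoin K ({σL a} : Set L))
        = Module.finrank K ↥(IntermediateField.adjoin K ({a} : Set L)) := by
  obtain ⟨hrad, hdeg, _⟩ := ha
  have hint : ∀ x : L, IsIntegral K x := Algebra.IsIntegral.isIntegral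
  have hstep : Module.finrank K⟮a⟯ K⟮a⟯⟮σL a⟯ = d := by
    have := adjoin.finiteDimensional (hint a)
    rw [finrank_adjoin_pair, mul_comm] at hdeg
    exact Nat.eq_of_mul_eq_mul_right Module.finrank_pos hdeg
  have hσa_le : K⟮σL a⟯ ≤ sigmaPartialField K L σL {a} 1 :=
    adjoin_simple_le_iff.2 (iterate_mem_sigmaPartialField (Set.mem_singleton a) le_rfl)
  have hσstep : Module.finrank K⟮σL a⟯ K⟮σL a⟯⟮σL (σL a)⟯ = d := le_antisymm
    (hstep ▸ finrank_adjoin_simple_map_le σL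
      (σL.restrict K⟮a⟯ K⟮σL a⟯ fun _ => map_mem_adjoin_simple_map σL σK hcomp)
      (fun _ => rfl) (hint (σL a)).tower_top)
    ((le_sigmaStepDegree hcomp hld hrad 1).trans
      (finrank_adjoin_simple_map_le (RingHom.id L) (inclusion hσa_le).toRingHom
        (fun _ => rfl) (hint _).tower_top))
  have hσgen : IsSubstandardGenerator K L σL d (σL a) :=
    ⟨fun x => (hrad x).elim fun _ hn => ⟨_, iterate_succ_mem_adjoin_range_iterate_map hcomp hn⟩,
      by rw [finrank_adjoin_pair, hσstep, mul_comm],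
      isGalois_adjoin_simple_map hcomp a⟩
  exact ⟨hσgen, le_antisymm (finrank_adjoin_simple_map_le σL σK hcomp (hint a)) (hmin _ hσgen)⟩
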